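/- Let A be a finite nonempty set of integers. Then there exists an integer N such that for all k ≥ N, |kA - kA| ≥ |kA + kA|, i.e., |kA - kA| ≥ |2kA|. In particular, no finite set A satisfies |cA + cA| > |cA - cA| for every positive integer c. -/

import Mathlib

open Finset Pointwise

/-- `itSum k A` is the k-fold sumset A + A + ⋯ + A (with `itSum 0 A = {0}`). -/
def itSum : ℕ → Finset ℤ → Finset ℤ
  | 0, _ => {0}
  | n+1, A => A + itSum n A

/-- `gDiff s d A = sA - dA`. -/
def gDiff (s d : ℕ) (A : Finset ℤ) : Finset ℤ := itSum s A - itSum d A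

/-!
An affine change of variables turns `A` into a set `B` with minimum `0`, maximum `M`, generating
`ℤ` as a group; it changes neither `|2kA|` nor `|kA - kA|`. By a Frobenius-type argument, `kB`
contains every integer of `[N, kM - N]` for some `N` independent of `k`. For `k ≥ 4N` this gives
`2kB ⊆ kM + (kB - kB)`: an element `x ∈ 2kB` with `x ≤ kM - N` already lies in `kB` (below `N`
because its nonzero summands number at most `x`), one with `x ≥ kM + N` has `x - kM ∈ kB` by the
same argument applied to the reflection `M - B`, and in between `x - kM` is a difference of two
elements of `[N, kM - N]`. Hence `|2kB| ≤ |kB - kB|`.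
-/

theorem itSum_eq_nsmul (k : ℕ) (A : Finset ℤ) : itSum k A = k • A := by
  induction k with
  | zero => rfl
  | succ k ih => rw [itSum, ih, succ_nsmul']

namespace Finset

variable {α : Type*} [DecidableEq α]

lemma card_nsmul_add_singleton [AddCommGroup α] (s : Finset α) (a : α) (n : ℕ) :
    #(n • (s + {a})) = #(n • s) := by
  rw [nsmul_add, nsmul_singleton, card_add_singleton]

lemma nsmul_sub_nsmul_add_singleton [AddCommGroup α] (s : Finset α) (a : α) (n : ℕ) :
    n • (s + {a}) - n • (s + {a}) = n • s - n • s := by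
  rw [nsmul_add, nsmul_singleton, add_sub_add_comm, singleton_sub_singleton, sub_self,
    singleton_zero, add_zero]

lemma image_sub {β : Type*} [AddGroup α] [AddGroup β] [DecidableEq β] (f : α →+ β)
    (s t : Finset α) : (s - t).image f = s.image f - t.image f :=
  image_image₂_distrib (map_sub f)

lemma card_nsmul_image {β : Type*} [AddGroup α] [AddGroup β] [DecidableEq β] (f : α →+ β)
    (hf : Function.Injective f) (s : Finset α) (n : ℕ) : #(n • s.image f) = #(n • s) := by
  rw [← image_nsmul, card_image_of_injective _ hf]

lemma card_nsmul_sub_nsmul_image {β : Type*} [AddGroup α] [AddGroup β] [DecidableEq β]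
    (f : α →+ β) (hf : Function.Injective f) (s : Finset α) (n : ℕ) :
    #(n • s.image f - n • s.image f) = #(n • s - n • s) := by
  rw [← image_nsmul, ← image_sub, card_image_of_injective _ hf]

lemma exists_mem_nsmul_sub_nsmul_of_mem_closure [AddCommGroup α] {s : Finset α} (h0 : 0 ∈ s)
    {x : α} (hx : x ∈ AddSubgroup.closure (s : Set α)) : ∃ n : ℕ, x ∈ n • s - n • s := by
  induction hx using AddSubgroup.closure_induction with
  | mem x hx => exact ⟨1, by simpa using sub_mem_sub hx h0⟩
  | zero => exact ⟨0, by simp⟩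
  | add x y _ _ hx hy =>
    obtain ⟨n, hn⟩ := hx
    obtain ⟨m, hm⟩ := hy
    refine ⟨n + m, ?_⟩
    rw [add_nsmul, add_sub_add_comm]
    exact add_mem_add hn hm
  | neg x _ hx =>
    obtain ⟨n, hn⟩ := hx
    exact ⟨n, by rw [← neg_sub]; exact neg_mem_neg hn⟩

lemma mem_singleton_sub_iff [AddCommGroup α] {s : Finset α} {a x : α} :
    x ∈ {a} - s ↔ a - x ∈ s := by
  rw [singleton_sub, mem_image]
  constructor
  · rintro ⟨y, hy, rfl⟩
    simpa using hy
  · exact fun h => ⟨a - x, h, sub_sub_cancel a x⟩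

lemma mem_nsmul_singleton_sub_iff [AddCommGroup α] {s : Finset α} {a x : α} {n : ℕ} :
    x ∈ n • ({a} - s) ↔ n • a - x ∈ n • s := by
  rw [nsmul_sub, nsmul_singleton, mem_singleton_sub_iff]

lemma nonneg_of_mem_nsmul [AddCommMonoid α] [PartialOrder α] [IsOrderedAddMonoid α]
    {s : Finset α} (hs : ∀ a ∈ s, 0 ≤ a) {n : ℕ} {x : α} (hx : x ∈ n • s) : 0 ≤ x := by
  induction n generalizing x with
  | zero => simp_all
  | succ n ih =>
    rw [succ_nsmul, mem_add] at hx
    obtain ⟨y, hy, a, ha, rfl⟩ := hx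
    exact add_nonneg (ih hy) (hs a ha)

variable {B : Finset ℤ}

lemma mem_nsmul_of_mem_nsmul_of_le (h0 : 0 ∈ B) (hB : ∀ b ∈ B, 0 ≤ b) {j n : ℕ} {x : ℤ}
    (hx : x ∈ j • B) (hxn : x ≤ n) : x ∈ n • B := by
  induction j generalizing x n with
  | zero => simp_all [zero_mem_nsmul h0]
  | succ j ih =>
    rw [succ_nsmul, mem_add] at hx
    obtain ⟨y, hy, b, hb, rfl⟩ := hx
    rcases (hB b hb).eq_or_lt with rfl | hb0
    · simpa using ih hy (by simpa using hxn)
    · have hy0 := nonneg_of_mem_nsmul hB hy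
      obtain ⟨m, rfl⟩ : ∃ m, n = m + 1 := Nat.exists_eq_succ_of_ne_zero (by omega)
      rw [succ_nsmul]
      exact add_mem_add (ih hy (by push_cast at hxn; omega)) hb

lemma Icc_mul_subset_nsmul {q : ℤ} {n : ℕ} (hq : q ∈ n • B) (hq1 : q + 1 ∈ n • B) (m : ℕ) :
    Icc (m * q) (m * q + m) ⊆ (m * n) • B := by
  intro x hx
  rw [mem_Icc] at hx
  obtain ⟨r, hr⟩ : ∃ r : ℕ, (r : ℤ) = x - m * q := ⟨(x - m * q).toNat, by omega⟩
  obtain ⟨s, hs⟩ := Nat.exists_eq_add_of_le (show r ≤ m by omega)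
  have h := add_mem_add (nsmul_mem_nsmul (n := r) hq1) (nsmul_mem_nsmul (n := s) hq)
  rw [← mul_nsmul', ← mul_nsmul', ← add_nsmul, ← add_mul, ← hs] at h
  convert h using 1
  simp only [nsmul_eq_mul]
  rw [hs] at hr
  push_cast at hr
  linarith

lemma Ico_subset_add_nsmul {M c : ℤ} {J : ℕ} (h0 : 0 ∈ B) (hM : M ∈ B) (hM0 : 0 ≤ M)
    (h : Ico c (c + M) ⊆ J • B) (t : ℕ) : Ico c (c + (t + 1) * M) ⊆ (J + t) • B := by
  induction t with
  | zero => simpa using h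
  | succ t ih =>
    intro x hx
    rw [mem_Ico] at hx
    rcases lt_or_ge x (c + (t + 1) * M) with hxt | hxt
    · exact nsmul_subset_nsmul_right h0 (by omega) (ih (mem_Ico.2 ⟨hx.1, hxt⟩))
    · have hxM : x - M ∈ Ico c (c + (t + 1) * M) := by
        rw [mem_Ico]; push_cast at hx; constructor <;> nlinarith
      have := add_mem_add (ih hxM) hM
      rwa [sub_add_cancel, ← succ_nsmul, add_assoc] at this

end Finset

lemma Int.finset_gcd_mem_closure (S : Finset ℤ) : S.gcd id ∈ AddSubgroup.closure (S : Set ℤ) := by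
  classical
  induction S using Finset.induction_on with
  | empty => simp
  | insert a s _ ih =>
    have ha : a ∈ AddSubgroup.closure ((insert a s : Finset ℤ) : Set ℤ) :=
      AddSubgroup.subset_closure (by simp)
    have hs : s.gcd id ∈ AddSubgroup.closure ((insert a s : Finset ℤ) : Set ℤ) :=
      AddSubgroup.closure_mono (by simp [Set.subset_insert]) ih
    rw [gcd_insert, id, ← Int.coe_gcd, Int.gcd_eq_gcd_ab]
    exact add_mem (by simpa [mul_comm] using zsmul_mem ha (a.gcdA _))
      (by simpa [mul_comm] using zsmul_mem hs (a.gcdB _))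

def FillsInterior (B : Finset ℤ) (M : ℤ) (N : ℕ) : Prop :=
  ∀ (k : ℕ) (x : ℤ), N ≤ x → x + N ≤ k * M → x ∈ k • B

lemma FillsInterior.mono {B : Finset ℤ} {M : ℤ} {N N' : ℕ} (h : FillsInterior B M N)
    (hN : N ≤ N') : FillsInterior B M N' :=
  fun k x hx hxk => h k x (by omega) (by omega)

structure IsNormalized (B : Finset ℤ) (M : ℤ) : Prop where
  zero_mem : 0 ∈ B
  mem : M ∈ B
  subset_Icc : B ⊆ Icc 0 M
  one_mem_closure : (1 : ℤ) ∈ AddSubgroup.closure (B : Set ℤ)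

namespace IsNormalized

variable {B : Finset ℤ} {M : ℤ}

lemma nonneg (h : IsNormalized B M) {b : ℤ} (hb : b ∈ B) : 0 ≤ b :=
  (mem_Icc.1 (h.subset_Icc hb)).1

lemma le (h : IsNormalized B M) {b : ℤ} (hb : b ∈ B) : b ≤ M :=
  (mem_Icc.1 (h.subset_Icc hb)).2

lemma pos (h : IsNormalized B M) : 0 < M := by
  by_contra! hM
  have hB : (B : Set ℤ) ⊆ {0} := fun b hb => by
    have := h.nonneg hb; have := h.le hb
    simp only [Set.mem_singleton_iff]; omega
  simpa [AddSubgroup.closure_singleton_zero] using AddSubgroup.closure_mono hB h.one_mem_closure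

lemma reflect (h : IsNormalized B M) : IsNormalized ({M} - B) M where
  zero_mem := mem_singleton_sub_iff.2 (by simpa using h.mem)
  mem := mem_singleton_sub_iff.2 (by simpa using h.zero_mem)
  subset_Icc x hx := by
    have hMx := mem_singleton_sub_iff.1 hx
    have := h.nonneg hMx; have := h.le hMx
    rw [mem_Icc]; omega
  one_mem_closure := by
    refine AddSubgroup.closure_le _ |>.2 (fun b hb => ?_) h.one_mem_closure
    have hM : M ∈ AddSubgroup.closure (({M} - B : Finset ℤ) : Set ℤ) :=
      AddSubgroup.subset_closure (mem_singleton_sub_iff.2 (by simpa using h.zero_mem))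
    have hMb : M - b ∈ AddSubgroup.closure (({M} - B : Finset ℤ) : Set ℤ) :=
      AddSubgroup.subset_closure (mem_singleton_sub_iff.2 (by simpa using hb))
    simpa using sub_mem hM hMb

lemma exists_fillsInterior (h : IsNormalized B M) : ∃ N, FillsInterior B M N := by
  have hM := h.pos
  obtain ⟨n, hn⟩ := exists_mem_nsmul_sub_nsmul_of_mem_closure h.zero_mem h.one_mem_closure
  obtain ⟨p, hp, q, hq, hpq⟩ := mem_sub.1 hn
  obtain ⟨m, hm⟩ : ∃ m : ℕ, (m : ℤ) = M - 1 := ⟨(M - 1).toNat, by omega⟩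
  have hq0 : 0 ≤ q := nonneg_of_mem_nsmul (fun _ => h.nonneg) hq
  have hbase : Ico (m * q) (m * q + M) ⊆ (m * n) • B := fun x hx =>
    Icc_mul_subset_nsmul hq (by rwa [← hpq, add_sub_cancel]) m
      (by rw [mem_Ico] at hx; rw [mem_Icc]; omega)
  have hmq : 0 ≤ (m : ℤ) * q := by positivity
  have hmnM : (0 : ℤ) ≤ m * n * M := by positivity
  refine ⟨(m * q + m * n * M).toNat, fun k x hx hxk => ?_⟩
  have hN : (((m * q + m * n * M).toNat : ℕ) : ℤ) = m * q + m * n * M := by omega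
  rw [hN] at hx hxk
  have hk : m * n ≤ k := by
    have : ((m * n : ℕ) : ℤ) * M ≤ k * M := by push_cast; nlinarith
    exact_mod_cast le_of_mul_le_mul_right this hM
  obtain ⟨t, rfl⟩ := Nat.exists_eq_add_of_le hk
  refine Ico_subset_add_nsmul h.zero_mem h.mem hM.le hbase t (mem_Ico.2 ⟨by nlinarith, ?_⟩)
  push_cast at hxk
  nlinarith

variable {N k : ℕ}

lemma mem_nsmul_of_add_le (h : IsNormalized B M) (hI : FillsInterior B M N) (hk : N ≤ k)
    {j : ℕ} {x : ℤ} (hx : x ∈ j • B) (hxk : x + N ≤ k * M) : x ∈ k • B := by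
  rcases lt_or_ge x N with hxN | hxN
  · exact mem_nsmul_of_mem_nsmul_of_le h.zero_mem (fun _ => h.nonneg) hx (by omega)
  · exact hI k x hxN hxk

lemma sub_mem_nsmul_of_le (h : IsNormalized B M) (hI : FillsInterior ({M} - B) M N)
    (hk : N ≤ k) {x : ℤ} (hx : x ∈ (2 * k) • B) (hxk : k * M + N ≤ x) : x - k * M ∈ k • B := by
  have hx' : (2 * k) • M - x ∈ (2 * k) • ({M} - B) :=
    mem_nsmul_singleton_sub_iff.2 (by simpa using hx)
  have := h.reflect.mem_nsmul_of_add_le hI hk hx' (by rw [nsmul_eq_mul]; push_cast; linarith)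
  rw [mem_nsmul_singleton_sub_iff] at this
  convert this using 1
  simp only [nsmul_eq_mul]
  push_cast
  ring

lemma two_mul_nsmul_subset (h : IsNormalized B M) (hI : FillsInterior B M N)
    (hI' : FillsInterior ({M} - B) M N) (hk : 4 * N ≤ k) :
    (2 * k) • B ⊆ k • B - k • B + {(k * M : ℤ)} := by
  intro x hx
  rw [← sub_add_cancel x (k * M)]
  refine add_mem_add ?_ (mem_singleton_self _)
  have hK : (k * M : ℤ) ∈ k • B := by simpa using nsmul_mem_nsmul (n := k) h.mem
  have hNK : 4 * (N : ℤ) ≤ k * M := by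
    have : (4 * N : ℤ) ≤ k := by exact_mod_cast hk
    nlinarith [h.pos]
  rcases le_or_gt (x + N) (k * M) with hlow | hlow
  · exact sub_mem_sub (h.mem_nsmul_of_add_le hI (by omega) hx hlow) hK
  rcases le_or_gt (k * M + N) x with hhigh | hhigh
  · simpa using sub_mem_sub (h.sub_mem_nsmul_of_le hI' (by omega) hx hhigh)
      (zero_mem_nsmul h.zero_mem)
  · simpa using sub_mem_sub (hI k (x - k * M + 2 * N) (by linarith) (by linarith))
      (hI k (2 * N) (by linarith) (by linarith))

lemma exists_card_two_mul_nsmul_le (h : IsNormalized B M) :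
    ∃ N : ℕ, ∀ k ≥ N, #((2 * k) • B) ≤ #(k • B - k • B) := by
  obtain ⟨N₁, h₁⟩ := h.exists_fillsInterior
  obtain ⟨N₂, h₂⟩ := h.reflect.exists_fillsInterior
  refine ⟨4 * (N₁ + N₂), fun k hk => ?_⟩
  calc #((2 * k) • B)
      ≤ #(k • B - k • B + {(k * M : ℤ)}) :=
        card_le_card (h.two_mul_nsmul_subset (h₁.mono le_self_add) (h₂.mono le_add_self) hk)
    _ = #(k • B - k • B) := card_add_singleton _ _

end IsNormalized

lemma exists_isNormalized {A : Finset ℤ} (hA : A.Nontrivial) :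
    ∃ (B : Finset ℤ) (M d a : ℤ), d ≠ 0 ∧ IsNormalized B M ∧
      A = B.image (AddMonoidHom.mulLeft d) + {a} := by
  have hne := hA.nonempty
  set a := A.min' hne
  obtain ⟨g, hg, hg1⟩ := A.extract_gcd (· - a) hne
  set d := A.gcd (· - a)
  have hd : d ≠ 0 := by
    obtain ⟨x, hx, y, hy, hxy⟩ := hA
    intro hd
    have := hg x hx
    have := hg y hy
    simp only [hd, zero_mul, sub_eq_zero] at *
    exact hxy (by simp_all)
  have hd0 : 0 < d := (Int.nonneg_of_normalize_eq_self normalize_gcd).lt_of_ne' hd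
  have hB : A.image g ⊆ Icc 0 ((A.image g).max' (hne.image g)) := by
    intro b hb
    obtain ⟨x, hx, rfl⟩ := mem_image.1 hb
    refine mem_Icc.2 ⟨nonneg_of_mul_nonneg_right ?_ hd0, le_max' _ _ hb⟩
    rw [← hg x hx, sub_nonneg]
    exact min'_le A x hx
  refine ⟨A.image g, _, d, a, hd, ⟨?_, max'_mem _ _, hB, ?_⟩, ?_⟩
  · refine mem_image.2 ⟨a, min'_mem A hne, ?_⟩
    simpa [hd] using (hg a (min'_mem A hne)).symm
  · have := Int.finset_gcd_mem_closure (A.image g)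
    rwa [gcd_image, Function.id_comp, hg1] at this
  · ext x
    simp only [mem_add, mem_singleton, mem_image, AddMonoidHom.coe_mulLeft]
    constructor
    · intro hx
      exact ⟨x - a, ⟨g x, ⟨x, hx, rfl⟩, (hg x hx).symm⟩, a, rfl, sub_add_cancel x a⟩
    · rintro ⟨_, ⟨_, ⟨y, hy, rfl⟩, rfl⟩, _, rfl, rfl⟩
      rw [← hg y hy, sub_add_cancel]
      exact hy

theorem exists_card_two_mul_nsmul_le {A : Finset ℤ} (hA : A.Nonempty) :
    ∃ N : ℕ, ∀ k ≥ N, #((2 * k) • A) ≤ #(k • A - k • A) := by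
  obtain ⟨a, rfl⟩ | hA := hA.exists_eq_singleton_or_nontrivial
  · exact ⟨0, fun k _ => by simp⟩
  obtain ⟨B, M, d, a, hd, hB, rfl⟩ := exists_isNormalized hA
  obtain ⟨N, hN⟩ := hB.exists_card_two_mul_nsmul_le
  refine ⟨N, fun k hk => ?_⟩
  have hinj := mul_right_injective₀ hd
  rw [card_nsmul_add_singleton, nsmul_sub_nsmul_add_singleton, card_nsmul_image _ hinj,
    card_nsmul_sub_nsmul_image _ hinj]
  exact hN k hk

theorem stmt_6 (A : Finset ℤ) (hne : A.Nonempty) :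
    (∃ N : ℕ, ∀ k : ℕ, N ≤ k →
      (gDiff k k A).card ≥ (itSum (2 * k) A).card) ∧
    ¬ (∀ c : ℕ, 1 ≤ c → (itSum (2 * c) A).card > (gDiff c c A).card) := by
  simp only [gDiff, itSum_eq_nsmul]
  obtain ⟨N, hN⟩ := exists_card_two_mul_nsmul_le hne
  refine ⟨⟨N, hN⟩, fun h => ?_⟩
  have := h (max N 1) (le_max_right _ _)
  have := hN (max N 1) (le_max_left _ _)
  omega
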